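/- arXiv:2004.11930 — 3 statements merged into one kernel-verified Lean document; each statement's English description precedes it below -/
import Mathlib

section
/- Every graph G on n vertices satisfies t(G) \ge (e(G)/(3n)) \cdot (4e(G) - n^2), where t(G) is the number of triangles and e(G) the number of edges of G. -/
open SimpleGraph

/-- `G` contains a copy of `H` (a subgraph isomorphic to `H`). -/
def containsCopy {W V : Type*} (H : SimpleGraph W) (G : SimpleGraph V) : Prop :=
  ∃ f : H →g G, Function.Injective f

/-- The number of triangles of `G`. -/
noncomputable def triCount {V : Type*} (G : SimpleGraph V) : ℕ :=
  {s : Finset V | G.IsNClique 3 s}.ncard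

/-- The number of edges of `G`. -/
noncomputable def edgeCount {V : Type*} (G : SimpleGraph V) : ℕ :=
  G.edgeSet.ncard

/-- The suspension `K_1 ∨ H` of a graph `H`: a new vertex (`none`) joined to all
vertices of `H`. -/
def susp {W : Type*} (H : SimpleGraph W) : SimpleGraph (Option W) where
  Adj a b :=
    match a, b with
    | some x, some y => H.Adj x y
    | some _, none => True
    | none, some _ => True
    | none, none => False
  symm := by
    constructor
    rintro (_ | x) (_ | y) h
    · exact h
    · trivial
    · trivial
    · exact h.symm
  loopless := by
    constructor
    rintro (_ | x) h
    · exact h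
    · exact H.irrefl h

/-- The Turán number: maximum number of edges of an `H`-free graph on `n` vertices. -/
noncomputable def exNum (n : ℕ) {W : Type*} (H : SimpleGraph W) : ℕ :=
  sSup {m | ∃ G : SimpleGraph (Fin n), ¬ containsCopy H G ∧ edgeCount G = m}

/-- The codegree of the pair `a, b`: number of common neighbours. -/
noncomputable def codeg {V : Type*} (G : SimpleGraph V) (a b : V) : ℕ :=
  (G.neighborSet a ∩ G.neighborSet b).ncard

/-! Summing `d(u) + d(v) ≤ n + |N(u) ∩ N(v)|` over the ordered adjacent pairs `(u, v)` gives
`2 Σ d(v)² ≤ 2en + 6t`, because every common neighbour of `u` and `v` completes a triangle and each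
triangle contains six ordered adjacent pairs. Cauchy–Schwarz gives `4e² = (Σ d(v))² ≤ n Σ d(v)²`,
and the two inequalities combine to `4e² ≤ n (3t + ne)`. -/

open Finset

namespace SimpleGraph

variable {V : Type*} [Fintype V] [DecidableEq V] (G : SimpleGraph V) [DecidableRel G.Adj]

theorem degree_add_degree_le_card_add_card_inter (u v : V) :
    G.degree u + G.degree v ≤
      Fintype.card V + #(G.neighborFinset u ∩ G.neighborFinset v) := by
  rw [← card_neighborFinset_eq_degree, ← card_neighborFinset_eq_degree,
    ← card_union_add_card_inter]
  exact Nat.add_le_add_right (card_le_univ _) _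

theorem card_inter_neighborFinset_le_card_triangles {u v : V} (huv : G.Adj u v) :
    #(G.neighborFinset u ∩ G.neighborFinset v) ≤
      #{s ∈ G.cliqueFinset 3 | u ∈ s ∧ v ∈ s} := by
  refine card_le_card_of_injOn (fun w => {u, v, w}) (fun w hw => ?_) (fun w hw w' hw' h => ?_)
  · simp only [coe_inter, Set.mem_inter_iff, mem_coe, mem_neighborFinset] at hw
    simp [is3Clique_triple_iff, huv, hw.1, hw.2]
  · simp only [coe_inter, Set.mem_inter_iff, mem_coe, mem_neighborFinset] at hw hw'
    have : w ∈ ({u, v, w'} : Finset V) := by simp only at h; rw [← h]; simp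
    simp only [mem_insert, mem_singleton] at this
    rcases this with rfl | rfl | rfl
    · exact (G.irrefl hw.1).elim
    · exact (G.irrefl hw.2).elim
    · rfl

theorem card_filter_dart_mem_le_card_offDiag (s : Finset V) :
    #{d : G.Dart | d.fst ∈ s ∧ d.snd ∈ s} ≤ #s.offDiag := by
  refine card_le_card_of_injOn Dart.toProd (fun d hd => ?_) (fun d _ d' _ h => Dart.ext _ _ h)
  simp only [coe_filter, mem_univ, true_and, Set.mem_ofPred_eq] at hd
  simp [hd.1, hd.2, d.adj.ne]

theorem sum_card_triangles_containing_dart_le :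
    ∑ d : G.Dart, #{s ∈ G.cliqueFinset 3 | d.fst ∈ s ∧ d.snd ∈ s} ≤
      6 * #(G.cliqueFinset 3) := by
  have hcount := sum_card_bipartiteAbove_eq_sum_card_bipartiteBelow (s := univ) (t := G.cliqueFinset 3)
    (fun (d : G.Dart) s => d.fst ∈ s ∧ d.snd ∈ s)
  simp only [bipartiteAbove, bipartiteBelow] at hcount
  rw [hcount, mul_comm, ← smul_eq_mul, ← sum_const]
  refine sum_le_sum fun s hs => ?_
  have h3 : #s = 3 := (mem_cliqueFinset_iff.1 hs).2
  simpa [offDiag_card, h3] using G.card_filter_dart_mem_le_card_offDiag s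

theorem sum_dart_degree_fst : ∑ d : G.Dart, G.degree d.fst = ∑ v, G.degree v ^ 2 := by
  rw [← sum_fiberwise univ (fun d : G.Dart => d.fst)]
  refine sum_congr rfl fun v _ => ?_
  rw [sum_congr rfl fun d hd => by rw [(mem_filter.1 hd).2], sum_const,
    dart_fst_fiber_card_eq_degree, smul_eq_mul, sq]

theorem sum_dart_degree_snd : ∑ d : G.Dart, G.degree d.snd = ∑ v, G.degree v ^ 2 := by
  rw [← sum_dart_degree_fst]
  exact Fintype.sum_equiv (Function.Involutive.toPerm _ Dart.symm_involutive) _ _ fun _ => rfl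

theorem sum_degree_sq_le :
    ∑ v, G.degree v ^ 2 ≤ 3 * #(G.cliqueFinset 3) + Fintype.card V * #G.edgeFinset := by
  have key : 2 * ∑ v, G.degree v ^ 2 ≤
      ∑ d : G.Dart, (Fintype.card V + #{s ∈ G.cliqueFinset 3 | d.fst ∈ s ∧ d.snd ∈ s}) :=
    calc 2 * ∑ v, G.degree v ^ 2
        = ∑ d : G.Dart, (G.degree d.fst + G.degree d.snd) := by
          rw [sum_add_distrib, sum_dart_degree_fst, sum_dart_degree_snd, two_mul]
      _ ≤ _ := sum_le_sum fun d _ =>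
          (G.degree_add_degree_le_card_add_card_inter d.fst d.snd).trans
            (Nat.add_le_add_left (G.card_inter_neighborFinset_le_card_triangles d.adj) _)
  rw [sum_add_distrib, sum_const, card_univ, dart_card_eq_twice_card_edges, smul_eq_mul] at key
  linarith [G.sum_card_triangles_containing_dart_le]

theorem four_mul_card_edgeFinset_sq_le :
    4 * #G.edgeFinset ^ 2 ≤
      Fintype.card V * (3 * #(G.cliqueFinset 3) + Fintype.card V * #G.edgeFinset) := by
  calc 4 * #G.edgeFinset ^ 2 = (∑ v, G.degree v) ^ 2 := by
        rw [sum_degrees_eq_twice_card_edges]; ring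
    _ ≤ Fintype.card V * ∑ v, G.degree v ^ 2 := sq_sum_le_card_mul_sum_sq
    _ ≤ _ := Nat.mul_le_mul_left _ G.sum_degree_sq_le

end SimpleGraph

/-- Nordhaus–Stewart: `t(G) ≥ (e(G)/(3n))·(4e(G) − n²)`. -/
theorem nordhaus_stewart {V : Type*} [Fintype V] [Nonempty V] (G : SimpleGraph V) :
    ((edgeCount G : ℝ) / (3 * Fintype.card V)) *
      (4 * (edgeCount G : ℝ) - (Fintype.card V : ℝ) ^ 2) ≤ (triCount G : ℝ) := by
  classical
  have ht : triCount G = #(G.cliqueFinset 3) := by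
    rw [triCount, ← Set.ncard_coe_finset, coe_cliqueFinset, cliqueSet]
  have he : edgeCount G = #G.edgeFinset := by
    rw [edgeCount, ← coe_edgeFinset, Set.ncard_coe_finset]
  have hn : (0 : ℝ) < Fintype.card V := by exact_mod_cast Fintype.card_pos
  have key : (4 * #G.edgeFinset ^ 2 : ℝ) ≤
      Fintype.card V * (3 * #(G.cliqueFinset 3) + Fintype.card V * #G.edgeFinset) := by
    exact_mod_cast G.four_mul_card_edgeFinset_sq_le
  rw [ht, he, div_mul_eq_mul_div, div_le_iff₀ (by positivity)]
  linarith
end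

section
/- Let n be divisible by 4. There exists a K_{1,2,2}-free graph on n vertices with at least n^2/4 triangles. Concretely, the graph H_n with parts A, B of size n/2 each, all edges between A and B, and a perfect matching inside each of A and B (so n/4 edges inside each part) is K_{1,2,2}-free and has exactly n^2/4 triangles. -/
open SimpleGraph

/-! In `H_n` every vertex has at most one neighbour on its own side, namely its partner in the
matching. If a vertex `c` were adjacent to all vertices of a 4-cycle, at most one cycle vertex
could lie on the side of `c`, so three of them lie on the other side; these contain a path of
length two of the cycle, whose middle vertex then has two neighbours on its own side. For the
count, each of the `n/2` matching edges spans a triangle with each of the `n/2` vertices of the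
opposite side. -/

namespace SimpleGraph

theorem containsCopy_iff_isContained {W V : Type*} {H : SimpleGraph W} {G : SimpleGraph V} :
    containsCopy H G ↔ H ⊑ G :=
  ⟨fun ⟨f, hf⟩ => ⟨⟨f, hf⟩⟩, fun ⟨f⟩ => ⟨f.toHom, f.injective⟩⟩

theorem triCount_map_equiv {V W : Type*} (G : SimpleGraph V) (e : V ≃ W) :
    triCount (G.map e) = triCount G := by
  change ((G.map e).cliqueSet 3).ncard = (G.cliqueSet 3).ncard
  rw [cliqueSet_map_of_equiv]
  exact Set.ncard_image_of_injective _ (Finset.map_injective _)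

theorem K122_not_isContained_of_sameSide_adj_unique {V : Type*} (G : SimpleGraph V)
    (side : V → Bool)
    (h : ∀ ⦃u v w⦄, G.Adj u v → G.Adj u w → side v = side u → side w = side u → v = w) :
    ¬ completeMultipartiteGraph ![Fin 1, Fin 2, Fin 2] ⊑ G := by
  rintro ⟨f⟩
  have adj : ∀ i j (x : ![Fin 1, Fin 2, Fin 2] i) (y : ![Fin 1, Fin 2, Fin 2] j), i ≠ j →
      G.Adj (f ⟨i, x⟩) (f ⟨j, y⟩) := fun i j x y hij => f.toHom.map_adj hij
  set c := f ⟨0, (0 : Fin 1)⟩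
  set a₀ := f ⟨1, (0 : Fin 2)⟩
  set a₁ := f ⟨1, (1 : Fin 2)⟩
  set b₀ := f ⟨2, (0 : Fin 2)⟩
  set b₁ := f ⟨2, (1 : Fin 2)⟩
  have ha : a₀ ≠ a₁ := f.injective.ne (sigma_mk_injective.ne (show (0 : Fin 2) ≠ 1 by decide))
  have hb : b₀ ≠ b₁ := f.injective.ne (sigma_mk_injective.ne (show (0 : Fin 2) ≠ 1 by decide))
  have hca₀ : G.Adj c a₀ := adj 0 1 _ _ (by decide)
  have hca₁ : G.Adj c a₁ := adj 0 1 _ _ (by decide)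
  have hcb₀ : G.Adj c b₀ := adj 0 2 _ _ (by decide)
  have hcb₁ : G.Adj c b₁ := adj 0 2 _ _ (by decide)
  have hab : ∀ x y : Fin 2, G.Adj (f ⟨1, x⟩) (f ⟨2, y⟩) := fun x y => adj 1 2 x y (by decide)
  have opposite : ∀ ⦃x y⦄, G.Adj c x → G.Adj c y → x ≠ y → side x = side c →
      side y = !side c :=
    fun x y hx hy hxy hxc => Bool.eq_not.mpr fun hyc => hxy (h hx hy hxc hyc)
  have no_path : ∀ ⦃x y z⦄, G.Adj y x → G.Adj y z → x ≠ z → side x = side y →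
      side z = side y → False :=
    fun x y z hx hz hxz hxy hzy => hxz (h hx hz hxy hzy)
  rcases Bool.eq_or_eq_not (side a₀) (side c) with ha₀ | ha₀
  · exact no_path (hab 1 0) (hab 1 1) hb
      ((opposite hca₀ hcb₀ (hab 0 0).ne ha₀).trans (opposite hca₀ hca₁ ha ha₀).symm)
      ((opposite hca₀ hcb₁ (hab 0 1).ne ha₀).trans (opposite hca₀ hca₁ ha ha₀).symm)
  rcases Bool.eq_or_eq_not (side a₁) (side c) with ha₁ | ha₁
  · exact no_path (hab 0 0) (hab 0 1) hb
      ((opposite hca₁ hcb₀ (hab 1 0).ne ha₁).trans ha₀.symm)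
      ((opposite hca₁ hcb₁ (hab 1 1).ne ha₁).trans ha₀.symm)
  rcases Bool.eq_or_eq_not (side b₀) (side c) with hb₀ | hb₀
  · exact no_path (hab 0 1).symm (hab 1 1).symm ha (ha₀.trans (opposite hcb₀ hcb₁ hb hb₀).symm)
      (ha₁.trans (opposite hcb₀ hcb₁ hb hb₀).symm)
  · exact no_path (hab 0 0).symm (hab 1 0).symm ha (ha₀.trans hb₀.symm) (ha₁.trans hb₀.symm)

/-- The vertex `(s, k, t)` is the endpoint `t` of the `k`-th matching edge on side `s`. -/
def completeBipartiteWithMatchings (m : ℕ) : SimpleGraph (Bool × Fin m × Bool) :=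
  fromRel fun x y => x.1 ≠ y.1 ∨ x.2.1 = y.2.1

variable {m : ℕ}

theorem completeBipartiteWithMatchings_adj {x y : Bool × Fin m × Bool} :
    (completeBipartiteWithMatchings m).Adj x y ↔ x ≠ y ∧ (x.1 ≠ y.1 ∨ x.2.1 = y.2.1) := by
  simp only [completeBipartiteWithMatchings, fromRel_adj, ne_comm (a := y.1),
    eq_comm (a := y.2.1), or_self]

theorem completeBipartiteWithMatchings_eq_partner_of_adj {u v : Bool × Fin m × Bool}
    (h : (completeBipartiteWithMatchings m).Adj u v) (hvu : v.1 = u.1) :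
    v = (u.1, u.2.1, !u.2.2) := by
  obtain ⟨s, k, t⟩ := u
  obtain ⟨s', k', t'⟩ := v
  simp only [completeBipartiteWithMatchings_adj, ne_eq, Prod.mk.injEq] at h hvu ⊢
  subst hvu
  cases t <;> cases t' <;> simp_all

def matchingEdgeTriangle : Bool × Fin m × (Fin m × Bool) → Finset (Bool × Fin m × Bool)
  | (s, k, w) => {(s, k, false), (s, k, true), (!s, w)}

theorem matchingEdgeTriangle_injective : (matchingEdgeTriangle (m := m)).Injective := by
  -- `(s, k, false)` and `(s, k, true)` cannot both be the apex `(!s', w')`, so `(s, k) = (s', k')`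
  rintro ⟨s, k, w⟩ ⟨s', k', w'⟩ h
  simp only [matchingEdgeTriangle, Finset.ext_iff, Finset.mem_insert, Finset.mem_singleton] at h
  have h₀ := (h (s, k, false)).1 (by simp)
  have h₁ := (h (s, k, true)).1 (by simp)
  have h₂ := (h (!s, w)).1 (by simp)
  grind

theorem matchingEdgeTriangle_isNClique (p : Bool × Fin m × (Fin m × Bool)) :
    (completeBipartiteWithMatchings m).IsNClique 3 (matchingEdgeTriangle p) := by
  obtain ⟨s, k, w⟩ := p
  simp [matchingEdgeTriangle, is3Clique_triple_iff, completeBipartiteWithMatchings_adj]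

theorem K122_not_isContained_completeBipartiteWithMatchings :
    ¬ completeMultipartiteGraph ![Fin 1, Fin 2, Fin 2] ⊑ completeBipartiteWithMatchings m :=
  K122_not_isContained_of_sameSide_adj_unique _ Prod.fst fun _ _ _ hv hw hvu hwu =>
    (completeBipartiteWithMatchings_eq_partner_of_adj hv hvu).trans
      (completeBipartiteWithMatchings_eq_partner_of_adj hw hwu).symm

theorem four_mul_sq_le_triCount_completeBipartiteWithMatchings :
    4 * m ^ 2 ≤ triCount (completeBipartiteWithMatchings m) := by
  calc 4 * m ^ 2 = (Finset.univ.map ⟨_, matchingEdgeTriangle_injective (m := m)⟩).card := by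
        simp; ring
    _ ≤ triCount (completeBipartiteWithMatchings m) := by
        rw [triCount, ← Set.ncard_coe_finset]
        refine Set.ncard_le_ncard ?_ (Set.toFinite _)
        intro t ht
        obtain ⟨p, -, rfl⟩ := Finset.mem_map.1 ht
        exact matchingEdgeTriangle_isNClique p

end SimpleGraph

/-- For `4 ∣ n` there is a `K_{1,2,2}`-free graph on `n` vertices with at least
`n²/4` triangles. -/
theorem K122_free_lower_bound (n : ℕ) (h4 : 4 ∣ n) :
    ∃ G : SimpleGraph (Fin n),
      ¬ containsCopy (completeMultipartiteGraph ![Fin 1, Fin 2, Fin 2]) G ∧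
      n ^ 2 ≤ 4 * triCount G := by
  obtain ⟨m, rfl⟩ := h4
  let e : Bool × Fin m × Bool ≃ Fin (4 * m) := Fintype.equivFinOfCardEq (by simp; ring)
  refine ⟨(completeBipartiteWithMatchings m).map e, ?_, ?_⟩
  · rw [containsCopy_iff_isContained, isContained_congr Iso.refl (Iso.map e _).symm]
    exact K122_not_isContained_completeBipartiteWithMatchings
  · rw [triCount_map_equiv]
    calc (4 * m) ^ 2 = 4 * (4 * m ^ 2) := by ring
      _ ≤ 4 * triCount (completeBipartiteWithMatchings m) :=
        Nat.mul_le_mul_left 4 four_mul_sq_le_triCount_completeBipartiteWithMatchings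
end

section
/- If a graph G contains no copy of \widehat{P}_4 (suspension of the 4-edge path) and no K_5 minus an edge, then any two copies of K_4 in G are edge-disjoint. -/
open SimpleGraph

/-!
Two distinct `K_4`'s sharing an edge share two or three vertices. If three, their union is a
`K_5^-` (the two private vertices form the missing edge). If two, say `a` and `b`, with private
vertices `c, d` and `e, f`, then `a` is adjacent to all of the path `c d b e f`, which gives a
`\widehat{P}_4`. Both forbidden graphs are thus covered by two `K_4`'s glued like the given
ones, and an injection that sends each of them into one of the given cliques is a copy.
-/

open Finset

lemma Finset.card_inter_lt_of_card_le_of_ne {α : Type*} [DecidableEq α] {s t : Finset α}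
    (hcard : #t ≤ #s) (hst : s ≠ t) : #(s ∩ t) < #s := by
  by_contra! h
  have hsub : s ⊆ t := inter_eq_left.mp (eq_of_subset_of_card_le inter_subset_left h)
  exact hst (eq_of_subset_of_card_le hsub hcard)

section Copies

variable {V : Type*} {G : SimpleGraph V}

lemma containsCopy_of_mapsTo_isClique {W : Type*} {H : SimpleGraph W} {A B : Set W} {s t : Set V}
    (hcover : ∀ ⦃i j⦄, H.Adj i j → i ∈ A ∧ j ∈ A ∨ i ∈ B ∧ j ∈ B)
    (hs : G.IsClique s) (ht : G.IsClique t) {f : W → V} (hf : Function.Injective f)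
    (hA : Set.MapsTo f A s) (hB : Set.MapsTo f B t) :
    containsCopy H G := by
  refine ⟨⟨f, fun {i j} hij => ?_⟩, hf⟩
  rcases hcover hij with ⟨hi, hj⟩ | ⟨hi, hj⟩
  · exact hs (hA hi) (hA hj) (hf.ne hij.ne)
  · exact ht (hB hi) (hB hj) (hf.ne hij.ne)

/-- `K_5^-` is the union of the `K_4`'s on `{0, 2, 3, 4}` and on `{1, 2, 3, 4}`. -/
lemma containsCopy_K5m_of_isClique {s t : Set V} (hs : G.IsClique s) (ht : G.IsClique t)
    {u v x y z : V} (hu : u ∈ s \ t) (hv : v ∈ t \ s) (hx : x ∈ s ∩ t) (hy : y ∈ s ∩ t)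
    (hz : z ∈ s ∩ t) (hxy : x ≠ y) (hxz : x ≠ z) (hyz : y ≠ z) :
    containsCopy ((⊤ : SimpleGraph (Fin 5)).deleteEdges {s(0, 1)}) G := by
  refine containsCopy_of_mapsTo_isClique (A := {i | i ≠ 1}) (B := {i | i ≠ 0})
    ?_ hs ht (f := ![u, v, x, y, z]) ?_ ?_ ?_
  · simp only [deleteEdges_adj, top_adj, Set.mem_singleton_iff, Set.mem_ofPred_eq]
    decide
  · intro i j h
    fin_cases i <;> fin_cases j <;> simp_all
  all_goals
    intro i hi
    fin_cases i <;> simp_all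

/-- `\widehat{P}_4` is contained in the union of the `K_4`'s spanned by the apex `none` with
the first three and with the last three vertices of the path. -/
lemma containsCopy_susp_pathGraph_of_isClique {s t : Set V} (hs : G.IsClique s)
    (ht : G.IsClique t) {a b c d e f : V} (ha : a ∈ s ∩ t) (hb : b ∈ s ∩ t)
    (hc : c ∈ s \ t) (hd : d ∈ s \ t) (he : e ∈ t \ s) (hf : f ∈ t \ s) (hab : a ≠ b)
    (hcd : c ≠ d) (hef : e ≠ f) :
    containsCopy (susp (pathGraph 5)) G := by
  refine containsCopy_of_mapsTo_isClique (A := {o | ∀ k ∈ o, k ≤ 2})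
    (B := {o | ∀ k ∈ o, 2 ≤ k}) ?_ hs ht (f := fun o => o.elim a ![c, d, b, e, f]) ?_ ?_ ?_
  · rintro (_ | i) (_ | j) h
    · exact h.elim
    · simpa using le_total j 2
    · simpa using le_total i 2
    · replace h : (pathGraph 5).Adj i j := h
      rw [pathGraph_adj] at h
      simp only [Set.mem_ofPred_eq, Option.mem_def, Option.some_inj, forall_eq', Fin.le_def]
      omega
  · rintro (_ | i) (_ | j) h
    · rfl
    · fin_cases j <;> simp_all
    · fin_cases i <;> simp_all
    · fin_cases i <;> fin_cases j <;> simp_all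
  all_goals
    rintro (_ | i) hi
    · simp_all
    · fin_cases i <;> simp_all

variable [DecidableEq V] {s t : Finset V}

lemma containsCopy_K5m_of_card_inter_eq_three (hs : G.IsNClique 4 s) (ht : G.IsNClique 4 t)
    (h : #(s ∩ t) = 3) :
    containsCopy ((⊤ : SimpleGraph (Fin 5)).deleteEdges {s(0, 1)}) G := by
  obtain ⟨u, hu⟩ := card_eq_one.mp
    (show #(s \ t) = 1 by rw [card_sdiff, inter_comm, h, hs.card_eq])
  obtain ⟨v, hv⟩ := card_eq_one.mp (show #(t \ s) = 1 by rw [card_sdiff, h, ht.card_eq])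
  obtain ⟨x, y, z, hxy, hxz, hyz, hi⟩ := card_eq_three.mp h
  refine containsCopy_K5m_of_isClique hs.isClique ht.isClique (u := u) (v := v)
    ?_ ?_ ?_ ?_ ?_ hxy hxz hyz <;>
  simp only [← coe_inter, ← coe_sdiff, mem_coe, hu, hv, hi, mem_insert, mem_singleton,
    true_or, or_true]

lemma containsCopy_susp_pathGraph_of_card_inter_eq_two (hs : G.IsNClique 4 s)
    (ht : G.IsNClique 4 t) (h : #(s ∩ t) = 2) : containsCopy (susp (pathGraph 5)) G := by
  obtain ⟨a, b, hab, hi⟩ := card_eq_two.mp h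
  obtain ⟨c, d, hcd, hst⟩ := card_eq_two.mp
    (show #(s \ t) = 2 by rw [card_sdiff, inter_comm, h, hs.card_eq])
  obtain ⟨e, f, hef, hts⟩ := card_eq_two.mp
    (show #(t \ s) = 2 by rw [card_sdiff, h, ht.card_eq])
  refine containsCopy_susp_pathGraph_of_isClique hs.isClique ht.isClique
    ?_ ?_ ?_ ?_ ?_ ?_ hab hcd hef <;>
  simp only [← coe_inter, ← coe_sdiff, mem_coe, hi, hst, hts, mem_insert, mem_singleton,
    true_or, or_true]

end Copies

/-- In a `\widehat{P}_4`-free, `K_5^-`-free graph, any two distinct copies of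
`K_4` are edge-disjoint (they share at most one vertex). -/
theorem K4_copies_edge_disjoint {V : Type*} [DecidableEq V] (G : SimpleGraph V)
    (hP4 : ¬ containsCopy (susp (pathGraph 5)) G)
    (hK5m : ¬ containsCopy ((⊤ : SimpleGraph (Fin 5)).deleteEdges {s(0, 1)}) G) :
    ∀ s t : Finset V, G.IsNClique 4 s → G.IsNClique 4 t → s ≠ t →
      (s ∩ t).card ≤ 1 := by
  intro s t hs ht hst
  have hlt := card_inter_lt_of_card_le_of_ne (ht.card_eq.trans hs.card_eq.symm).le hst
  rw [hs.card_eq] at hlt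
  by_contra! h
  obtain h2 | h3 : #(s ∩ t) = 2 ∨ #(s ∩ t) = 3 := by omega
  · exact hP4 (containsCopy_susp_pathGraph_of_card_inter_eq_two hs ht h2)
  · exact hK5m (containsCopy_K5m_of_card_inter_eq_three hs ht h3)
end
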